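/- (Core of the finiteness of roots leaving the complementary stability region.) Suppose either m < n, or m = n with |k_G| ≠ 1. Then the set { ω ≥ 0 : H(ω) ≥ 0 and φ′(ω) > 0 } is bounded. (Since σ₀ < 0, the condition φ′(ω) > 0 corresponds to crossing direction −1, i.e. characteristic roots leaving the region Re(s) ≥ σ₀, and H(ω) ≥ 0 is the feasibility condition for a nonnegative delay; hence only frequencies in a bounded set can correspond to roots leaving the region for some delay h ∈ [0, ∞).) -/

import Mathlib

open Complex Real Filter Finset Set

open scoped Topology

/-!
On the line `s = σ₀ + iω` the derivatives `Θ'` and `H'` are sums of rational functions of `ω`, one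
per zero or pole: each contributes `O(1/ω²)` to `Θ'` and `±(1/σ₀)(1/ω + O(1/ω²))` to `H'`, so
`Θ' → 0` and `ω H' → (m - n)/σ₀`. As `φ' = Θ' - H - ω H'`, we get `φ' + H → (n - m)/σ₀`.
If `m < n` this limit is negative, so `H ≥ 0` and `φ' > 0` cannot both hold for large `ω`.
If `m = n`, then `H → ln|k_G|/σ₀ ≠ 0` while `φ' → -ln|k_G|/σ₀`, and again one of them is
eventually negative.
-/

lemma Complex.log_norm_sub_eq (σ ω a b : ℝ) :
    Real.log ‖((σ : ℂ) + ω * I) - (a + b * I)‖ = Real.log ((σ - a) ^ 2 + (ω - b) ^ 2) / 2 := by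
  rw [Complex.norm_eq_sqrt_sq_add_sq, Real.log_sqrt (by positivity)]
  simp

lemma Real.log_norm_mul_prod_div_prod {𝕜 ι κ : Type*} [NormedField 𝕜] (s : Finset ι)
    (t : Finset κ) {k : 𝕜} {f : ι → 𝕜} {g : κ → 𝕜} (hk : k ≠ 0) (hf : ∀ i ∈ s, f i ≠ 0)
    (hg : ∀ j ∈ t, g j ≠ 0) :
    Real.log ‖k * (∏ i ∈ s, f i) / ∏ j ∈ t, g j‖
      = Real.log ‖k‖ + ∑ i ∈ s, Real.log ‖f i‖ - ∑ j ∈ t, Real.log ‖g j‖ := by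
  have hf' : ∀ i ∈ s, ‖f i‖ ≠ 0 := fun i hi => norm_ne_zero_iff.mpr (hf i hi)
  have hg' : ∀ j ∈ t, ‖g j‖ ≠ 0 := fun j hj => norm_ne_zero_iff.mpr (hg j hj)
  rw [norm_div, norm_mul, norm_prod, norm_prod,
    Real.log_div (mul_ne_zero (norm_ne_zero_iff.mpr hk) (prod_ne_zero_iff.mpr hf'))
      (prod_ne_zero_iff.mpr hg'),
    Real.log_mul (norm_ne_zero_iff.mpr hk) (prod_ne_zero_iff.mpr hf'),
    Real.log_prod hf', Real.log_prod hg']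

lemma hasDerivAt_arctan_sub_div {c : ℝ} (hc : c ≠ 0) (a ω : ℝ) :
    HasDerivAt (fun x => Real.arctan ((x - a) / c)) (c / (c ^ 2 + (ω - a) ^ 2)) ω := by
  have h := (Real.hasDerivAt_arctan _).comp ω (((hasDerivAt_id ω).sub_const a).div_const c)
  refine h.congr_deriv ?_
  simp only [id]
  field_simp

lemma hasDerivAt_log_sq_add_sq_div_two {c : ℝ} (hc : c ≠ 0) (a ω : ℝ) :
    HasDerivAt (fun x => Real.log (c ^ 2 + (x - a) ^ 2) / 2)
      ((ω - a) / (c ^ 2 + (ω - a) ^ 2)) ω := by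
  have hγ : c ^ 2 + (ω - a) ^ 2 ≠ 0 := by positivity
  have hγ' : HasDerivAt (fun x => c ^ 2 + (x - a) ^ 2) (2 * (ω - a)) ω := by
    simpa using (((hasDerivAt_id ω).sub_const a).fun_pow 2).const_add (c ^ 2)
  refine ((hγ'.log hγ).div_const 2).congr_deriv ?_
  field_simp

section Factor

variable (c a : ℝ)

lemma tendsto_sq_add_sq_atTop : Tendsto (fun ω => c ^ 2 + (ω - a) ^ 2) atTop atTop :=
  tendsto_atTop_add_const_left _ _ <|
    (tendsto_pow_atTop two_ne_zero).comp (tendsto_atTop_add_const_right _ (-a) tendsto_id)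

lemma tendsto_div_sq_add_sq_atTop : Tendsto (fun ω => c / (c ^ 2 + (ω - a) ^ 2)) atTop (𝓝 0) :=
  (tendsto_sq_add_sq_atTop c a).const_div_atTop c

lemma tendsto_sub_div_self_atTop : Tendsto (fun ω : ℝ => (ω - a) / ω) atTop (𝓝 1) := by
  have h := (tendsto_const_nhds (x := (1 : ℝ))).sub
    ((tendsto_inv_atTop_zero (𝕜 := ℝ)).const_mul a)
  rw [mul_zero, sub_zero] at h
  refine h.congr' ?_
  filter_upwards [eventually_ne_atTop 0] with ω hω
  field_simp

lemma tendsto_sq_add_sq_div_sq_atTop :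
    Tendsto (fun ω => (c ^ 2 + (ω - a) ^ 2) / ω ^ 2) atTop (𝓝 1) := by
  have h := (((tendsto_inv_atTop_zero (𝕜 := ℝ)).pow 2).const_mul (c ^ 2)).add
    ((tendsto_sub_div_self_atTop a).pow 2)
  rw [zero_pow two_ne_zero, mul_zero, zero_add, one_pow] at h
  refine h.congr' ?_
  filter_upwards [eventually_ne_atTop 0] with ω hω
  field_simp

lemma tendsto_mul_sub_div_sq_add_sq_atTop :
    Tendsto (fun ω => ω * ((ω - a) / (c ^ 2 + (ω - a) ^ 2))) atTop (𝓝 1) := by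
  have h := (tendsto_sub_div_self_atTop a).div (tendsto_sq_add_sq_div_sq_atTop c a) one_ne_zero
  rw [div_one] at h
  refine h.congr' ?_
  filter_upwards [eventually_ne_atTop 0] with ω hω
  simp only [Pi.div_apply]
  field_simp

lemma tendsto_log_sq_add_sq_div_two_sub_log_atTop :
    Tendsto (fun ω => Real.log (c ^ 2 + (ω - a) ^ 2) / 2 - Real.log ω) atTop (𝓝 0) := by
  have h := ((continuousAt_log one_ne_zero).tendsto.comp
    (tendsto_sq_add_sq_div_sq_atTop c a)).div_const 2
  rw [Real.log_one, zero_div] at h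
  refine h.congr' ?_
  filter_upwards [eventually_gt_atTop 0, (tendsto_sq_add_sq_atTop c a).eventually_gt_atTop 0]
    with ω hω hγ
  rw [Function.comp_apply, Real.log_div hγ.ne' (by positivity), Real.log_pow]
  push_cast
  ring

end Factor

section FactorSums

variable {ι : Type*} [Fintype ι] (c a : ι → ℝ)

noncomputable def logDistSum (ω : ℝ) : ℝ := ∑ i, Real.log (c i ^ 2 + (ω - a i) ^ 2) / 2

noncomputable def arctanSum (ω : ℝ) : ℝ := ∑ i, Real.arctan ((ω - a i) / c i)

variable {c} in
lemma hasDerivAt_arctanSum (hc : ∀ i, c i ≠ 0) (ω : ℝ) :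
    HasDerivAt (arctanSum c a) (∑ i, c i / (c i ^ 2 + (ω - a i) ^ 2)) ω :=
  HasDerivAt.fun_sum fun i _ => hasDerivAt_arctan_sub_div (hc i) (a i) ω

variable {c} in
lemma hasDerivAt_logDistSum (hc : ∀ i, c i ≠ 0) (ω : ℝ) :
    HasDerivAt (logDistSum c a) (∑ i, (ω - a i) / (c i ^ 2 + (ω - a i) ^ 2)) ω :=
  HasDerivAt.fun_sum fun i _ => hasDerivAt_log_sq_add_sq_div_two (hc i) (a i) ω

lemma tendsto_sum_div_sq_add_sq_atTop :
    Tendsto (fun ω => ∑ i, c i / (c i ^ 2 + (ω - a i) ^ 2)) atTop (𝓝 0) := by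
  simpa using tendsto_finsetSum univ fun i _ => tendsto_div_sq_add_sq_atTop (c i) (a i)

lemma tendsto_mul_sum_sub_div_sq_add_sq_atTop :
    Tendsto (fun ω => ω * ∑ i, (ω - a i) / (c i ^ 2 + (ω - a i) ^ 2)) atTop
      (𝓝 (Fintype.card ι)) := by
  simpa [Finset.mul_sum] using
    tendsto_finsetSum univ fun i _ => tendsto_mul_sub_div_sq_add_sq_atTop (c i) (a i)

lemma tendsto_logDistSum_sub_mul_log_atTop :
    Tendsto (fun ω => logDistSum c a ω - Fintype.card ι * Real.log ω) atTop (𝓝 0) := by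
  simpa [logDistSum, Finset.sum_sub_distrib] using
    tendsto_finsetSum univ fun i _ => tendsto_log_sq_add_sq_div_two_sub_log_atTop (c i) (a i)

end FactorSums

section Crossing

variable {ι κ : Type*} [Fintype ι] [Fintype κ] (σ₀ K : ℝ) (c a : ι → ℝ) (d b : κ → ℝ)

/- With `c, a` the offsets `σ₀ - σ_z`, `ω_z` of the zeros, `d, b` those of the poles and
`K = ln|k_G|`, these are the functions `H` and `φ` of the statement. -/
noncomputable def crossingDelay (ω : ℝ) : ℝ :=
  (K + logDistSum c a ω - logDistSum d b ω) / σ₀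

noncomputable def crossingPhase (ω : ℝ) : ℝ :=
  arctanSum c a ω - arctanSum d b ω - ω * crossingDelay σ₀ K c a d b ω

variable {c d} in
lemma tendsto_deriv_crossingPhase_add_crossingDelay (hc : ∀ i, c i ≠ 0) (hd : ∀ j, d j ≠ 0) :
    Tendsto (fun ω => deriv (crossingPhase σ₀ K c a d b) ω + crossingDelay σ₀ K c a d b ω)
      atTop (𝓝 (((Fintype.card κ : ℝ) - Fintype.card ι) / σ₀)) := by
  have hderiv (ω : ℝ) : deriv (crossingPhase σ₀ K c a d b) ω + crossingDelay σ₀ K c a d b ω =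
      (∑ i, c i / (c i ^ 2 + (ω - a i) ^ 2)) - (∑ j, d j / (d j ^ 2 + (ω - b j) ^ 2))
        - (ω * ∑ i, (ω - a i) / (c i ^ 2 + (ω - a i) ^ 2)
          - ω * ∑ j, (ω - b j) / (d j ^ 2 + (ω - b j) ^ 2)) / σ₀ := by
    have hH := (((hasDerivAt_logDistSum a hc ω).const_add K).sub
      (hasDerivAt_logDistSum b hd ω)).div_const σ₀
    have hφ : HasDerivAt (crossingPhase σ₀ K c a d b) _ ω :=
      ((hasDerivAt_arctanSum a hc ω).sub (hasDerivAt_arctanSum b hd ω)).sub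
        ((hasDerivAt_id ω).mul hH)
    rw [hφ.deriv]
    simp only [crossingDelay, id]
    ring
  simp_rw [hderiv]
  convert ((tendsto_sum_div_sq_add_sq_atTop c a).sub (tendsto_sum_div_sq_add_sq_atTop d b)).sub
    (((tendsto_mul_sum_sub_div_sq_add_sq_atTop c a).sub
      (tendsto_mul_sum_sub_div_sq_add_sq_atTop d b)).div_const σ₀) using 2
  ring

lemma tendsto_crossingDelay_of_card_eq (h : Fintype.card ι = Fintype.card κ) :
    Tendsto (crossingDelay σ₀ K c a d b) atTop (𝓝 (K / σ₀)) := by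
  have hlim := (((tendsto_logDistSum_sub_mul_log_atTop c a).sub
    (tendsto_logDistSum_sub_mul_log_atTop d b)).const_add K).div_const σ₀
  rw [sub_zero, add_zero] at hlim
  refine hlim.congr fun ω => ?_
  rw [crossingDelay, h]
  ring

end Crossing

lemma eventually_not_nonneg_and_pos_of_tendsto_add {α : Type*} {l : Filter α} {f g : α → ℝ}
    {s : ℝ} (hs : s < 0) (h : Tendsto (fun x => g x + f x) l (𝓝 s)) :
    ∀ᶠ x in l, ¬(0 ≤ f x ∧ 0 < g x) := by
  filter_upwards [h.eventually_lt_const hs] with x hx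
  rintro ⟨hf, hg⟩
  linarith

lemma eventually_not_nonneg_and_pos_of_tendsto_add_zero {α : Type*} {l : Filter α}
    {f g : α → ℝ} {L : ℝ} (hL : L ≠ 0) (hf : Tendsto f l (𝓝 L))
    (h : Tendsto (fun x => g x + f x) l (𝓝 0)) : ∀ᶠ x in l, ¬(0 ≤ f x ∧ 0 < g x) := by
  rcases hL.lt_or_gt with hL | hL
  · filter_upwards [hf.eventually_lt_const hL] with x hx
    exact fun hx' => hx.not_ge hx'.1
  · have hg : Tendsto g l (𝓝 (-L)) := by simpa using h.sub hf
    filter_upwards [hg.eventually_lt_const (neg_neg_of_pos hL)] with x hx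
    exact fun hx' => hx.not_gt hx'.2

lemma isBounded_setOf_nonneg_and_of_eventually_atTop {p : ℝ → Prop}
    (h : ∀ᶠ x in atTop, ¬p x) : Bornology.IsBounded {x : ℝ | 0 ≤ x ∧ p x} := by
  obtain ⟨N, hN⟩ := eventually_atTop.mp h
  refine (Metric.isBounded_Icc 0 N).subset fun x ⟨hx, hpx⟩ => ⟨hx, ?_⟩
  by_contra! hlt
  exact hN x hlt.le hpx

theorem stmt_18_general
    (m n : ℕ) (kG : ℝ) (hkG : kG ≠ 0)
    (σz ωz : Fin m → ℝ) (σp ωp : Fin n → ℝ)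
    (σ0 : ℝ) (hσ0 : σ0 < 0)
    (hz : ∀ k, σz k ≠ σ0) (hp : ∀ i, σp i ≠ σ0)
    (G : ℂ → ℂ)
    (hG : ∀ s : ℂ, G s =
      (kG : ℂ) * (∏ k : Fin m, (s - ((σz k : ℂ) + (ωz k : ℂ) * Complex.I))) /
        (∏ i : Fin n, (s - ((σp i : ℂ) + (ωp i : ℂ) * Complex.I))))
    (H : ℝ → ℝ)
    (hH : ∀ ω : ℝ, H ω = Real.log (‖G ((σ0 : ℂ) + (ω : ℂ) * Complex.I)‖) / σ0)
    (Θ : ℝ → ℝ)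
    (hΘ : ∀ ω : ℝ, Θ ω =
      (∑ k : Fin m, Real.arctan ((ω - ωz k) / (σ0 - σz k)))
        - ∑ i : Fin n, Real.arctan ((ω - ωp i) / (σ0 - σp i)))
    (φ : ℝ → ℝ) (hφ : ∀ ω : ℝ, φ ω = Θ ω - ω * H ω)
    (hcase : m < n ∨ (m = n ∧ |kG| ≠ 1))
    : Bornology.IsBounded {ω : ℝ | 0 ≤ ω ∧ 0 ≤ H ω ∧ 0 < deriv φ ω} := by
  set c : Fin m → ℝ := fun k => σ0 - σz k
  set d : Fin n → ℝ := fun i => σ0 - σp i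
  have hc (k : Fin m) : c k ≠ 0 := sub_ne_zero.2 (hz k).symm
  have hd (i : Fin n) : d i ≠ 0 := sub_ne_zero.2 (hp i).symm
  have hH' : H = crossingDelay σ0 (Real.log |kG|) c ωz d ωp := by
    funext ω
    rw [hH, hG, Real.log_norm_mul_prod_div_prod _ _ (ofReal_ne_zero.2 hkG)
      (fun k _ h => hz k (by simpa using congrArg re (sub_eq_zero.1 h).symm))
      (fun i _ h => hp i (by simpa using congrArg re (sub_eq_zero.1 h).symm))]
    simp only [Complex.log_norm_sub_eq, norm_real, Real.norm_eq_abs, crossingDelay, logDistSum,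
      c, d]
  have hφ' : φ = crossingPhase σ0 (Real.log |kG|) c ωz d ωp := by
    funext ω
    rw [hφ, hΘ, hH']
    rfl
  have hlim := tendsto_deriv_crossingPhase_add_crossingDelay σ0 (Real.log |kG|) ωz ωp hc hd
  rw [Fintype.card_fin, Fintype.card_fin] at hlim
  rw [hH', hφ']
  apply isBounded_setOf_nonneg_and_of_eventually_atTop
  rcases hcase with hmn | ⟨rfl, hk⟩
  · have hmn' : (m : ℝ) < n := Nat.cast_lt.2 hmn
    exact eventually_not_nonneg_and_pos_of_tendsto_add
      (div_neg_of_pos_of_neg (sub_pos.2 hmn') hσ0) hlim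
  · have hlog : Real.log |kG| ≠ 0 :=
      Real.log_ne_zero.2 ⟨abs_ne_zero.2 hkG, hk, by linarith [abs_nonneg kG]⟩
    rw [sub_self, zero_div] at hlim
    exact eventually_not_nonneg_and_pos_of_tendsto_add_zero (div_ne_zero hlog hσ0.ne)
      (tendsto_crossingDelay_of_card_eq _ _ _ _ _ _ rfl) hlim

theorem stmt_18
    (m n : ℕ) (kG : ℝ) (hkG : kG ≠ 0)
    (σz ωz : Fin m → ℝ) (σp ωp : Fin n → ℝ)
    (σ0 : ℝ) (hσ0 : σ0 < 0)
    (hz : ∀ k, σz k ≠ σ0) (hp : ∀ i, σp i ≠ σ0)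
    (G : ℂ → ℂ)
    (hG : ∀ s : ℂ, G s =
      (kG : ℂ) * (∏ k : Fin m, (s - ((σz k : ℂ) + (ωz k : ℂ) * Complex.I))) /
        (∏ i : Fin n, (s - ((σp i : ℂ) + (ωp i : ℂ) * Complex.I))))
    (γz : Fin m → ℝ → ℝ)
    (hγz : ∀ (k : Fin m) (ω : ℝ), γz k ω = (σ0 - σz k) ^ 2 + (ω - ωz k) ^ 2)
    (γp : Fin n → ℝ → ℝ)
    (hγp : ∀ (i : Fin n) (ω : ℝ), γp i ω = (σ0 - σp i) ^ 2 + (ω - ωp i) ^ 2)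
    (H : ℝ → ℝ)
    (hH : ∀ ω : ℝ, H ω = Real.log (‖G ((σ0 : ℂ) + (ω : ℂ) * Complex.I)‖) / σ0)
    (Θ : ℝ → ℝ)
    (hΘ : ∀ ω : ℝ, Θ ω =
      (∑ k : Fin m, Real.arctan ((ω - ωz k) / (σ0 - σz k)))
        - ∑ i : Fin n, Real.arctan ((ω - ωp i) / (σ0 - σp i)))
    (φ : ℝ → ℝ) (hφ : ∀ ω : ℝ, φ ω = Θ ω - ω * H ω)
    (hcase : m < n ∨ (m = n ∧ |kG| ≠ 1))
    : Bornology.IsBounded {ω : ℝ | 0 ≤ ω ∧ 0 ≤ H ω ∧ 0 < deriv φ ω} :=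
  stmt_18_general m n kG hkG σz ωz σp ωp σ0 hσ0 hz hp G hG H hH Θ hΘ φ hφ hcase
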